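/- Let n ≥ 1, κ > 0 and 0 ≤ t < T. Let α : ℝⁿ × ℝ → ℝⁿ be continuous and, for each s, continuously differentiable in x. Let K ⊆ ℝⁿ be compact and let m : ℝⁿ × [t,T] → ℝ be continuously differentiable and nonnegative, with m(·,s) supported in K for every s ∈ [t,T], satisfying ∂ₛ m + div_x(α m) = 0 pointwise. Let p : ℝⁿ → ℝ be continuously differentiable and nonnegative, with ∇p(x) = 0 whenever p(x) = 0, and suppose that ⟨∇p(x), α(x,s)⟩ ≤ −κ for every s ∈ [t,T] and every x with p(x) > 0. Then for every s ∈ [t,T], d/ds ∫_{ℝⁿ} p(x) m(x,s) dx ≤ −κ · ∫_{{x : p(x) > 0}} m(x,s) dx ≤ 0. -/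

import Mathlib

open Set MeasureTheory
open scoped RealInnerProductSpace

/-- The divergence of a vector field on `ℝⁿ`, as the trace of its Fréchet
derivative. -/
noncomputable def divergence {n : ℕ}
    (v : EuclideanSpace ℝ (Fin n) → EuclideanSpace ℝ (Fin n))
    (x : EuclideanSpace ℝ (Fin n)) : ℝ :=
  LinearMap.trace ℝ (EuclideanSpace ℝ (Fin n)) (fderiv ℝ v x).toLinearMap

theorem trace_eq_sum (n : ℕ) (L : EuclideanSpace ℝ (Fin n) →L[ℝ] EuclideanSpace ℝ (Fin n)) :
    LinearMap.trace ℝ (EuclideanSpace ℝ (Fin n)) L.toLinearMap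
      = ∑ i, L (EuclideanSpace.single i 1) i := by
  rw [LinearMap.trace_eq_matrix_trace ℝ (EuclideanSpace.basisFun (Fin n) ℝ).toBasis, Matrix.trace]
  apply Finset.sum_congr rfl
  intro i _
  simp [Matrix.diag, LinearMap.toMatrix_apply, EuclideanSpace.basisFun_apply]

theorem trace_smulRight (n : ℕ) (f : EuclideanSpace ℝ (Fin n) →L[ℝ] ℝ)
    (v : EuclideanSpace ℝ (Fin n)) :
    LinearMap.trace ℝ (EuclideanSpace ℝ (Fin n)) (f.smulRight v).toLinearMap = f v := by
  rw [trace_eq_sum]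
  simp only [ContinuousLinearMap.smulRight_apply, PiLp.smul_apply, smul_eq_mul]
  have : v = ∑ i, v i • EuclideanSpace.single i 1 := by
    ext j
    rw [WithLp.ofLp_sum, Fintype.sum_apply]
    simp [EuclideanSpace.single_apply]
  conv_rhs => rw [this]
  rw [map_sum]
  simp [mul_comm]

theorem pi_div_zero (k : ℕ) (w : (Fin (k+1) → ℝ) → (Fin (k+1) → ℝ))
    (hw : ContDiff ℝ 1 w) (hcs : HasCompactSupport w) :
    ∫ x : Fin (k+1) → ℝ, ∑ i, fderiv ℝ w x (Pi.single i 1) i = 0 := by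
  obtain ⟨r, hr⟩ := hcs.isBounded.subset_closedBall 0
  set R : ℝ := |r| + 1 with hR
  have hRpos : 0 < R := by positivity
  have hsub : tsupport w ⊆ Metric.ball (0 : Fin (k+1) → ℝ) R := by
    refine hr.trans (Metric.closedBall_subset_ball ?_)
    have : r ≤ |r| := le_abs_self r
    linarith
  set a : Fin (k+1) → ℝ := fun _ => -R
  set b : Fin (k+1) → ℝ := fun _ => R
  have hab : a ≤ b := fun i => by simp only [a, b]; linarith
  have hzero : ∀ x ∉ Metric.ball (0 : Fin (k+1) → ℝ) R, w x = 0 := fun x hx =>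
    image_eq_zero_of_notMem_tsupport (fun h => hx (hsub h))
  have hd0 : ∀ x ∉ Metric.ball (0 : Fin (k+1) → ℝ) R, fderiv ℝ w x = 0 := by
    intro x hx
    have hmem : x ∈ (tsupport w)ᶜ := fun h => hx (hsub h)
    have hev : w =ᶠ[nhds x] (fun _ => 0) := by
      filter_upwards [(isClosed_tsupport w).isOpen_compl.mem_nhds hmem] with y hy
      exact image_eq_zero_of_notMem_tsupport hy
    rw [hev.fderiv_eq, fderiv_fun_const]
    rfl
  have hIccsub : Metric.ball (0 : Fin (k+1) → ℝ) R ⊆ Icc a b := by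
    intro x hx
    have hn : ‖x‖ < R := by simpa using hx
    constructor <;> intro i <;>
      have := (abs_le.1 ((norm_le_pi_norm x i).trans hn.le)) <;> simp only [a, b] <;>
        linarith [this.1, this.2]
  have hcont : Continuous fun x => ∑ i, fderiv ℝ w x (Pi.single i 1) i := by
    apply continuous_finset_sum
    intro i _
    exact (continuous_apply i).comp ((hw.continuous_fderiv one_ne_zero).clm_apply continuous_const)
  have key := MeasureTheory.integral_divergence_of_hasFDerivAt_off_countable a b hab w
    (fderiv ℝ w) ∅ Set.countable_empty (hw.continuous.continuousOn)
    (fun x _ => (hw.differentiable one_ne_zero x).hasFDerivAt)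
    (hcont.continuousOn.integrableOn_compact isCompact_Icc)
  have hfaces : ∀ i : Fin (k+1), ((∫ x in Icc (a ∘ i.succAbove) (b ∘ i.succAbove),
        w (i.insertNth (b i) x) i) - ∫ x in Icc (a ∘ i.succAbove) (b ∘ i.succAbove),
        w (i.insertNth (a i) x) i) = 0 := by
    intro i
    have h1 : ∀ (c : ℝ), |c| = R → ∀ x : Fin k → ℝ, w (i.insertNth c x : Fin (k+1) → ℝ) i = 0 := by
      intro c hc x
      have : (i.insertNth c x : Fin (k+1) → ℝ) ∉ Metric.ball (0 : Fin (k+1) → ℝ) R := by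
        intro h
        have hn : ‖(i.insertNth c x : Fin (k+1) → ℝ)‖ < R := by simpa using h
        have : |c| ≤ ‖(i.insertNth c x : Fin (k+1) → ℝ)‖ := by
          have := norm_le_pi_norm (i.insertNth c x : Fin (k+1) → ℝ) i
          simpa using this
        linarith
      rw [hzero _ this]
      rfl
    rw [setIntegral_congr_fun measurableSet_Icc (fun x _ => h1 (b i) (by simp [b]; linarith) x),
        setIntegral_congr_fun measurableSet_Icc (fun x _ => h1 (a i) (by simp [a]; linarith) x)]
    simp
  rw [Finset.sum_congr rfl (fun i _ => hfaces i), Finset.sum_const, smul_zero] at key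
  rw [← key]
  symm
  apply setIntegral_eq_integral_of_forall_compl_eq_zero
  intro x hx
  rw [hd0 x (fun h => hx (hIccsub h))]
  simp

theorem euclid_div_zero (n : ℕ) (hn : 1 ≤ n)
    (w : EuclideanSpace ℝ (Fin n) → EuclideanSpace ℝ (Fin n))
    (hw : ContDiff ℝ 1 w) (hcs : HasCompactSupport w) :
    ∫ x, divergence w x = 0 := by
  obtain ⟨k, rfl⟩ : ∃ k, n = k + 1 := ⟨n - 1, (Nat.succ_pred_eq_of_pos hn).symm⟩
  set eL := EuclideanSpace.equiv (Fin (k+1)) ℝ with heL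
  set w' : (Fin (k+1) → ℝ) → (Fin (k+1) → ℝ) := fun y => eL (w (eL.symm y)) with hw'
  have hw'c : ContDiff ℝ 1 w' := by
    exact (eL.contDiff.comp hw).comp eL.symm.contDiff
  have hw'cs : HasCompactSupport w' := by
    have h1 : HasCompactSupport fun y => w (eL.symm y) :=
      hcs.comp_homeomorph eL.symm.toHomeomorph
    exact h1.comp_left (g := eL) (by simp)
  have hfd : ∀ y : Fin (k+1) → ℝ, HasFDerivAt w'
      (((eL : EuclideanSpace ℝ (Fin (k+1)) →L[ℝ] (Fin (k+1) → ℝ)).comp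
        (fderiv ℝ w (eL.symm y))).comp
        (eL.symm : (Fin (k+1) → ℝ) →L[ℝ] EuclideanSpace ℝ (Fin (k+1)))) y := by
    intro y
    exact (eL.hasFDerivAt.comp (eL.symm y)
      (hw.differentiable one_ne_zero _).hasFDerivAt).comp y eL.symm.hasFDerivAt
  have hdiv : ∀ x : EuclideanSpace ℝ (Fin (k+1)),
      divergence w x = ∑ i, fderiv ℝ w' (eL x) (Pi.single i 1) i := by
    intro x
    rw [divergence, trace_eq_sum]
    apply Finset.sum_congr rfl
    intro i _
    rw [(hfd (eL x)).fderiv]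
    simp only [ContinuousLinearMap.coe_comp', Function.comp_apply,
      ContinuousLinearEquiv.coe_coe, ContinuousLinearEquiv.symm_apply_apply]
    have h1 : eL.symm (Pi.single i 1) = EuclideanSpace.single i 1 := rfl
    rw [h1]
    rfl
  have hmp : MeasurePreserving (MeasurableEquiv.toLp 2 (Fin (k+1) → ℝ)).symm volume volume :=
    EuclideanSpace.volume_preserving_symm_measurableEquiv_toLp (Fin (k+1))
  have : ∫ x, divergence w x
      = ∫ y : Fin (k+1) → ℝ, ∑ i, fderiv ℝ w' y (Pi.single i 1) i := by
    rw [← hmp.integral_comp (MeasurableEquiv.toLp 2 (Fin (k+1) → ℝ)).symm.measurableEmbedding]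
    exact integral_congr_ae (Filter.Eventually.of_forall fun x => hdiv x)
  rw [this]
  exact pi_div_zero k w' hw'c hw'cs

-- helpers
theorem fderiv_zero_off {X Y : Type*} [NormedAddCommGroup X] [NormedSpace ℝ X]
    [NormedAddCommGroup Y] [NormedSpace ℝ Y] (v : X → Y) (K : Set X) (hKc : IsClosed K)
    (hv : ∀ y ∉ K, v y = 0) {x : X} (hx : x ∉ K) : fderiv ℝ v x = 0 := by
  have hev : v =ᶠ[nhds x] (fun _ => 0) := by
    filter_upwards [hKc.isOpen_compl.mem_nhds hx] with y hy
    exact hv y hy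
  rw [hev.fderiv_eq, fderiv_fun_const]
  rfl

theorem divergence_off {n : ℕ} (v : EuclideanSpace ℝ (Fin n) → EuclideanSpace ℝ (Fin n))
    (K : Set (EuclideanSpace ℝ (Fin n))) (hKc : IsClosed K)
    (hv : ∀ y ∉ K, v y = 0) {x : EuclideanSpace ℝ (Fin n)} (hx : x ∉ K) :
    divergence v x = 0 := by
  rw [divergence, fderiv_zero_off v K hKc hv hx]
  simp

theorem divergence_cont {n : ℕ} (v : EuclideanSpace ℝ (Fin n) → EuclideanSpace ℝ (Fin n))
    (hv : ContDiff ℝ 1 v) : Continuous (divergence v) := by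
  have : divergence v = fun x => ∑ i, fderiv ℝ v x (EuclideanSpace.single i 1) i := by
    funext x; exact trace_eq_sum n (fderiv ℝ v x)
  rw [this]
  apply continuous_finset_sum
  intro i _
  exact (continuous_apply i).comp
    ((PiLp.continuous_ofLp ..).comp ((hv.continuous_fderiv one_ne_zero).clm_apply continuous_const))

theorem inner_gradient {n : ℕ} (p : EuclideanSpace ℝ (Fin n) → ℝ)
    (x v : EuclideanSpace ℝ (Fin n)) : ⟪gradient p x, v⟫ = fderiv ℝ p x v := by
  rw [gradient]
  exact InnerProductSpace.toDual_symm_apply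

theorem gradient_cont {n : ℕ} (p : EuclideanSpace ℝ (Fin n) → ℝ) (hp : ContDiff ℝ 1 p) :
    Continuous (gradient p) := by
  have : gradient p = fun x =>
      (InnerProductSpace.toDual ℝ (EuclideanSpace ℝ (Fin n))).symm (fderiv ℝ p x) := rfl
  rw [this]
  exact (InnerProductSpace.toDual ℝ _).symm.continuous.comp (hp.continuous_fderiv one_ne_zero)

-- product rule for divergence
theorem divergence_smul {n : ℕ} (p : EuclideanSpace ℝ (Fin n) → ℝ)
    (v : EuclideanSpace ℝ (Fin n) → EuclideanSpace ℝ (Fin n))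
    (hp : ContDiff ℝ 1 p) (hv : ContDiff ℝ 1 v) (x : EuclideanSpace ℝ (Fin n)) :
    divergence (fun y => p y • v y) x = ⟪gradient p x, v x⟫ + p x * divergence v x := by
  have hd : HasFDerivAt (fun y => p y • v y)
      (p x • fderiv ℝ v x + (fderiv ℝ p x).smulRight (v x)) x :=
    ((hp.differentiable one_ne_zero x).hasFDerivAt).smul ((hv.differentiable one_ne_zero x).hasFDerivAt)
  rw [divergence, hd.fderiv]
  have h2 : (p x • fderiv ℝ v x + (fderiv ℝ p x).smulRight (v x)).toLinearMap
      = p x • (fderiv ℝ v x).toLinearMap + ((fderiv ℝ p x).smulRight (v x)).toLinearMap := rfl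
  rw [h2, map_add, LinearMap.map_smul]
  have htr : LinearMap.trace ℝ (EuclideanSpace ℝ (Fin n))
      ((fderiv ℝ p x).smulRight (v x)).toLinearMap = fderiv ℝ p x (v x) :=
    trace_smulRight n (fderiv ℝ p x) (v x)
  rw [htr, inner_gradient]
  rw [divergence, smul_eq_mul]
  ring

/-- (Mechanism (eq:ferrara).) If the velocity field pushes
strictly against the weight, `⟪∇p, α⟫ ≤ −κ` wherever `p > 0`, then the weighted
mass of a nonnegative solution of the continuity equation decreases at rate at
least `κ · ∫_{p>0} m`. -/
theorem weighted_mass_pushback_decrease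
    (n : ℕ) (hn : 1 ≤ n) (κ t T : ℝ) (hκ : 0 < κ) (ht : 0 ≤ t) (htT : t < T)
    (α : EuclideanSpace ℝ (Fin n) → ℝ → EuclideanSpace ℝ (Fin n))
    (hαc : Continuous (fun q : EuclideanSpace ℝ (Fin n) × ℝ => α q.1 q.2))
    (hαreg : ∀ s : ℝ, ContDiff ℝ 1 (fun x => α x s))
    (K : Set (EuclideanSpace ℝ (Fin n))) (hK : IsCompact K)
    (m : EuclideanSpace ℝ (Fin n) × ℝ → ℝ)
    (hm : ContDiff ℝ 1 m)
    (hmnonneg : ∀ x : EuclideanSpace ℝ (Fin n), ∀ s : ℝ, 0 ≤ m (x, s))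
    (hsupp : ∀ s ∈ Icc t T, Function.support (fun x => m (x, s)) ⊆ K)
    (hpde : ∀ (x : EuclideanSpace ℝ (Fin n)), ∀ s ∈ Icc t T,
      deriv (fun s' => m (x, s')) s +
        divergence (fun x' => m (x', s) • α x' s) x = 0)
    (p : EuclideanSpace ℝ (Fin n) → ℝ) (hp : ContDiff ℝ 1 p)
    (hpnonneg : ∀ x, 0 ≤ p x)
    (hgrad0 : ∀ x, p x = 0 → gradient p x = 0)
    (hpush : ∀ s ∈ Icc t T, ∀ x : EuclideanSpace ℝ (Fin n),
      0 < p x → ⟪gradient p x, α x s⟫ ≤ -κ) :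
    ∀ s ∈ Icc t T,
      ∃ d : ℝ,
        HasDerivWithinAt (fun s' => ∫ x, p x * m (x, s')) d (Icc t T) s ∧
        d ≤ -κ * ∫ x in {x | 0 < p x}, m (x, s) ∧
        -κ * (∫ x in {x | 0 < p x}, m (x, s)) ≤ 0 := by
  intro s hs
  have hpc := hp.continuous
  have hmc := hm.continuous
  have hmxc : ∀ σ : ℝ, Continuous fun x => m (x, σ) := fun σ =>
    hmc.comp (continuous_id.prodMk continuous_const)
  have hKclosed := hK.isClosed
  have hmzero : ∀ s' ∈ Icc t T, ∀ x ∉ K, m (x, s') = 0 := by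
    intro s' hs' x hx
    by_contra h
    exact hx (hsupp s' hs' (by simpa [Function.mem_support] using h))
  -- time derivative of m
  set dm : EuclideanSpace ℝ (Fin n) → ℝ → ℝ :=
    fun x σ => fderiv ℝ m (x, σ) (0, 1) with hdm
  have hder : ∀ x σ, HasDerivAt (fun s' => m (x, s')) (dm x σ) σ := by
    intro x σ
    have h1 : HasDerivAt (fun s' : ℝ => ((x, s') : EuclideanSpace ℝ (Fin n) × ℝ))
        ((0 : EuclideanSpace ℝ (Fin n)), (1 : ℝ)) σ :=
      (hasDerivAt_const σ x).prodMk (hasDerivAt_id σ)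
    exact (hm.differentiable one_ne_zero (x, σ)).hasFDerivAt.comp_hasDerivAt σ h1
  have hdmc : Continuous fun z : EuclideanSpace ℝ (Fin n) × ℝ => p z.1 * dm z.1 z.2 := by
    apply (hpc.comp continuous_fst).mul
    exact ((hm.continuous_fderiv one_ne_zero).clm_apply continuous_const)
  have hdmxc : ∀ σ : ℝ, Continuous fun x => dm x σ :=
    fun σ => ((hm.continuous_fderiv one_ne_zero).clm_apply continuous_const).comp
      (continuous_id.prodMk continuous_const)
  set G : ℝ → ℝ := fun σ => ∫ x in K, p x * m (x, σ) with hG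
  set d : ℝ := ∫ x in K, p x * dm x s with hd
  obtain ⟨C, hC⟩ : ∃ C, ∀ z ∈ K ×ˢ Icc (s-1) (s+1), ‖p z.1 * dm z.1 z.2‖ ≤ C :=
    (hK.prod isCompact_Icc).exists_bound_of_continuousOn hdmc.continuousOn
  have hGd : HasDerivAt G d s := by
    have key := hasDerivAt_integral_of_dominated_loc_of_deriv_le
      (μ := MeasureTheory.volume.restrict K) (x₀ := s) (s := Metric.ball s 1) (Metric.ball_mem_nhds s one_pos)
      (F := fun σ x => p x * m (x, σ)) (F' := fun σ x => p x * dm x σ)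
      (bound := fun _ => C)
      (Filter.Eventually.of_forall fun σ => (hpc.mul (hmxc σ)).aestronglyMeasurable)
      (((hpc.mul (hmxc s)).continuousOn).integrableOn_compact hK)
      ((hpc.mul (hdmxc s)).aestronglyMeasurable)
      ?_ ?_ ?_
    · exact key.2
    · filter_upwards [ae_restrict_mem hK.measurableSet] with x hx
      intro σ hσ
      have hσ' : σ ∈ Icc (s-1) (s+1) := by
        rw [Real.ball_eq_Ioo] at hσ
        exact Ioo_subset_Icc_self hσ
      exact hC (x, σ) ⟨hx, hσ'⟩
    · exact (integrableOn_const hK.measure_lt_top.ne)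
    · exact Filter.Eventually.of_forall fun x σ hσ => (hder x σ).const_mul (p x)
  have hFG : ∀ σ ∈ Icc t T, G σ = ∫ x, p x * m (x, σ) := fun σ hσ =>
    setIntegral_eq_integral_of_forall_compl_eq_zero fun x hx => by
      rw [hmzero σ hσ x hx, mul_zero]
  have hDeriv : HasDerivWithinAt (fun s' => ∫ x, p x * m (x, s')) d (Icc t T) s :=
    hGd.hasDerivWithinAt.congr (fun y hy => (hFG y hy).symm) (hFG s hs).symm
  -- integrability of m
  have hm_int : Integrable fun x => m (x, s) :=
    (hmxc s).integrable_of_hasCompactSupport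
      (HasCompactSupport.intro hK (hmzero s hs))
  have hset : MeasurableSet {x | 0 < p x} := (isOpen_lt continuous_const hpc).measurableSet
  have hint_nonneg : 0 ≤ ∫ x in {x | 0 < p x}, m (x, s) :=
    setIntegral_nonneg hset fun x _ => hmnonneg x s
  refine ⟨d, hDeriv, ?_, by nlinarith⟩
  -- the vector field
  set w : EuclideanSpace ℝ (Fin n) → EuclideanSpace ℝ (Fin n) :=
    fun x' => m (x', s) • α x' s with hw
  have hwC : ContDiff ℝ 1 w :=
    (hm.comp (contDiff_id.prodMk contDiff_const)).smul (hαreg s)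
  have hwzero : ∀ x ∉ K, w x = 0 := fun x hx => by
    rw [hw]
    simp only [hmzero s hs x hx, zero_smul]
  have hpde' : ∀ x, p x * dm x s = -(p x * divergence w x) := by
    intro x
    have h := hpde x s hs
    have h2 : deriv (fun s' => m (x, s')) s = dm x s := (hder x s).deriv
    have h3 : divergence w x = divergence (fun x' => m (x', s) • α x' s) x := rfl
    rw [show dm x s = -divergence w x by rw [h3]; linarith]
    ring
  have hdivK : ∀ x ∉ K, divergence w x = 0 := fun x hx =>
    divergence_off w K hKclosed hwzero hx
  have hdivc : Continuous (divergence w) := divergence_cont w hwC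
  have hpdiv_int : Integrable fun x => p x * divergence w x :=
    (hpc.mul hdivc).integrable_of_hasCompactSupport
      (HasCompactSupport.intro hK fun x hx => by rw [Pi.mul_apply, hdivK x hx, mul_zero])
  have hgradw_cont : Continuous fun x => ⟪gradient p x, w x⟫ :=
    (gradient_cont p hp).inner hwC.continuous
  have hgradw_int : Integrable fun x => ⟪gradient p x, w x⟫ :=
    hgradw_cont.integrable_of_hasCompactSupport
      (HasCompactSupport.intro hK fun x hx => by rw [hwzero x hx, inner_zero_right])
  -- divergence theorem
  have huC : ContDiff ℝ 1 fun y => p y • w y := hp.smul hwC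
  have hucs : HasCompactSupport fun y => p y • w y :=
    HasCompactSupport.intro hK fun x hx => by rw [hwzero x hx, smul_zero]
  have hzero_int : ∫ x, divergence (fun y => p y • w y) x = 0 :=
    euclid_div_zero n hn _ huC hucs
  have hsplit : ∀ x, divergence (fun y => p y • w y) x
      = ⟪gradient p x, w x⟫ + p x * divergence w x := divergence_smul p w hp hwC
  rw [funext hsplit] at hzero_int
  rw [integral_add hgradw_int hpdiv_int] at hzero_int
  -- identify d
  set A : EuclideanSpace ℝ (Fin n) → ℝ :=
    fun x => m (x, s) * ⟪gradient p x, α x s⟫ with hA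
  have hAeq : ∀ x, ⟪gradient p x, w x⟫ = A x := by
    intro x
    rw [hA, hw]
    simp only [real_inner_smul_right]
  have hA_int : Integrable A := by
    rw [← funext hAeq]
    exact hgradw_int
  have hdA : d = ∫ x, A x := by
    rw [hd]
    calc ∫ x in K, p x * dm x s = ∫ x in K, -(p x * divergence w x) := by
          exact setIntegral_congr_fun hK.measurableSet fun x _ => hpde' x
      _ = ∫ x, -(p x * divergence w x) :=
          setIntegral_eq_integral_of_forall_compl_eq_zero fun x hx => by
            rw [hdivK x hx, mul_zero, neg_zero]
      _ = -∫ x, p x * divergence w x := integral_neg _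
      _ = ∫ x, ⟪gradient p x, w x⟫ := by linarith
      _ = ∫ x, A x := integral_congr_ae (Filter.Eventually.of_forall hAeq)
  rw [hdA]
  have hstep1 : ∫ x, A x = ∫ x in {x | 0 < p x}, A x :=
    (setIntegral_eq_integral_of_forall_compl_eq_zero fun x hx => by
      have hp0 : p x = 0 := le_antisymm (not_lt.1 hx) (hpnonneg x)
      rw [hA]
      simp only [hgrad0 x hp0, inner_zero_left, mul_zero]).symm
  rw [hstep1]
  have hstep2 : ∫ x in {x | 0 < p x}, A x ≤ ∫ x in {x | 0 < p x}, -κ * m (x, s) := by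
    apply setIntegral_mono_on hA_int.integrableOn (hm_int.const_mul (-κ)).integrableOn hset
    intro x hx
    have h1 := hpush s hs x hx
    have h2 := hmnonneg x s
    show m (x, s) * ⟪gradient p x, α x s⟫ ≤ -κ * m (x, s)
    calc m (x, s) * ⟪gradient p x, α x s⟫ ≤ m (x, s) * (-κ) :=
          mul_le_mul_of_nonneg_left h1 h2
      _ = -κ * m (x, s) := mul_comm _ _
  calc ∫ x in {x | 0 < p x}, A x ≤ ∫ x in {x | 0 < p x}, -κ * m (x, s) := hstep2
    _ = -κ * ∫ x in {x | 0 < p x}, m (x, s) := integral_const_mul _ _
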